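/- The points (u,v) = ((−(a+d) ± 6t)/12, 0), where t² = ad, have order 2 on the Weierstrass curve W: v² = u³ + Au + B with A = −(a²+14ad+d²)/48, B = −(a³−33a²d−33ad²+d³)/864; that is, u = (−(a+d)±6t)/12 is a root of u³ + Au + B. -/

import Mathlib

/-! Since `t ^ 2 = a * d`, the cubic `u ^ 3 + A u + B` splits as
`(u - (a + d) / 6) (u - u₊) (u - u₋)` with `u± = (-(a + d) ± 6 t) / 12`: the three roots sum to `0`,
and `u₊ u₋ = ((a + d) ^ 2 - 36 a d) / 144`. -/

theorem weierstrass_cubic_eq_mul {k : Type*} [Field k] {a d t : k}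
    (h2 : (2 : k) ≠ 0) (h3 : (3 : k) ≠ 0) (ht : t ^ 2 = a * d) (u : k) :
    u ^ 3 - ((a ^ 2 + 14 * a * d + d ^ 2) / 48) * u
        - ((a ^ 3 - 33 * a ^ 2 * d - 33 * a * d ^ 2 + d ^ 3) / 864) =
      (u - (a + d) / 6) * (u - (-(a + d) + 6 * t) / 12) * (u - (-(a + d) - 6 * t) / 12) := by
  have h (i j : ℕ) : (2 : k) ^ i * 3 ^ j ≠ 0 := mul_ne_zero (pow_ne_zero i h2) (pow_ne_zero j h3)
  have h6 : (6 : k) ≠ 0 := by convert h 1 1 using 1; norm_num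
  have h12 : (12 : k) ≠ 0 := by convert h 2 1 using 1; norm_num
  have h48 : (48 : k) ≠ 0 := by convert h 4 1 using 1; norm_num
  have h864 : (864 : k) ≠ 0 := by convert h 5 3 using 1; norm_num
  field_simp
  linear_combination (8957952 * u - 1492992 * (a + d)) * ht

theorem weierstrass_order_two_points_general {k : Type*} [Field k] (a d t : k)
    (h2 : (2 : k) ≠ 0) (h3 : (3 : k) ≠ 0)
    (ht : t ^ 2 = a * d) :
    (((-(a + d) + 6 * t) / 12) ^ 3
        - ((a ^ 2 + 14 * a * d + d ^ 2) / 48) * ((-(a + d) + 6 * t) / 12)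
        - ((a ^ 3 - 33 * a ^ 2 * d - 33 * a * d ^ 2 + d ^ 3) / 864) = 0) ∧
    (((-(a + d) - 6 * t) / 12) ^ 3
        - ((a ^ 2 + 14 * a * d + d ^ 2) / 48) * ((-(a + d) - 6 * t) / 12)
        - ((a ^ 3 - 33 * a ^ 2 * d - 33 * a * d ^ 2 + d ^ 3) / 864) = 0) := by
  constructor <;> rw [weierstrass_cubic_eq_mul h2 h3 ht] <;> simp

/-- the points ((−(a+d) ± 6t)/12, 0) with t² = ad are points of
order 2 on the Weierstrass curve, i.e. the u-coordinates are roots of the cubic. -/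
theorem weierstrass_order_two_points {k : Type*} [Field k] (a d t : k)
    (h2 : (2 : k) ≠ 0) (h3 : (3 : k) ≠ 0)
    (ha : a ≠ 0) (hd : d ≠ 0) (had : a ≠ d)
    (ht : t ^ 2 = a * d) :
    (((-(a + d) + 6 * t) / 12) ^ 3
        - ((a ^ 2 + 14 * a * d + d ^ 2) / 48) * ((-(a + d) + 6 * t) / 12)
        - ((a ^ 3 - 33 * a ^ 2 * d - 33 * a * d ^ 2 + d ^ 3) / 864) = 0) ∧
    (((-(a + d) - 6 * t) / 12) ^ 3
        - ((a ^ 2 + 14 * a * d + d ^ 2) / 48) * ((-(a + d) - 6 * t) / 12)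
        - ((a ^ 3 - 33 * a ^ 2 * d - 33 * a * d ^ 2 + d ^ 3) / 864) = 0) :=
  weierstrass_order_two_points_general a d t h2 h3 ht
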